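/- Let es be a weak evacuation schedule on T = {0, 1, …, t_max} for a building graph G, and let Δ ∈ ℕ with Δ ≤ t_max. Define the Δ-delayed schedule es^Δ by es^Δ(t) = es(0) for 0 ≤ t < Δ and es^Δ(t) = es(t − Δ) for Δ ≤ t ≤ t_max. Then es^Δ is a weak evacuation schedule. -/

import Mathlib

open scoped Classical

/-- A building graph `G = ⟨V, E, EX, c, d⟩`: vertices `V`, edges `E ⊆ V × V`,
exits `EX ⊂ V`, capacity functions (`cV` on vertices, `cE` on edges) and
travel-time functions (`dV` on vertices, `dE` on edges), with `d(v) = 0` for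
every vertex. -/
structure BuildingGraph (V : Type) where
  E : Set (V × V)
  EX : Set V
  cV : V → ℤ
  cE : V × V → ℤ
  dV : V → ℤ
  dE : V × V → ℤ
  dV_zero : ∀ v, dV v = 0

/-- A location is a vertex or an edge. -/
abbrev Loc (V : Type) := V ⊕ (V × V)

/-- A weak evacuation schedule on `T = {0, 1, …, tmax}`:
(1) from a vertex one can only stay, move onto an incident edge, or move to an
adjacent vertex; (2) from an edge one can only stay or move to one of its
endpoints; (3) moving from `v₁` to an adjacent `v₂` takes at least `d(v₁,v₂)`
time; (4) a person who reaches an exit stays there. -/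
def IsWES {V P : Type} (G : BuildingGraph V) (tmax : ℕ)
    (wes : ℕ → P → Loc V) : Prop :=
  (∀ (p : P) (t : ℕ) (v₁ : V), t < tmax → wes t p = Sum.inl v₁ →
      wes (t + 1) p = Sum.inl v₁ ∨
      ∃ v₂, (v₁, v₂) ∈ G.E ∧
        (wes (t + 1) p = Sum.inr (v₁, v₂) ∨ wes (t + 1) p = Sum.inl v₂)) ∧
  (∀ (p : P) (t : ℕ) (v₁ v₂ : V), t < tmax → (v₁, v₂) ∈ G.E →
      wes t p = Sum.inr (v₁, v₂) →
      wes (t + 1) p = Sum.inr (v₁, v₂) ∨ wes (t + 1) p = Sum.inl v₁ ∨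
        wes (t + 1) p = Sum.inl v₂) ∧
  (∀ (p : P) (t k : ℕ) (v₁ v₂ : V), (v₁, v₂) ∈ G.E → t + k ≤ tmax →
      wes t p = Sum.inl v₁ → wes (t + k) p = Sum.inl v₂ →
      G.dE (v₁, v₂) ≤ (k : ℤ)) ∧
  (∀ (p : P) (t' t'' : ℕ), t' < t'' → t'' ≤ tmax →
      (∃ v ∈ G.EX, wes t' p = Sum.inl v) → wes t'' p = wes t' p)

/-- A strong evacuation schedule: a WES additionally satisfying the vertex and
edge capacity constraints at every time point, and such that every person has
reached an exit by time `tmax`. -/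
def IsSES {V P : Type} [Fintype P] (G : BuildingGraph V) (tmax : ℕ)
    (es : ℕ → P → Loc V) : Prop :=
  IsWES G tmax es ∧
  (∀ t ≤ tmax, ∀ v : V, ({p : P | es t p = Sum.inl v}.ncard : ℤ) ≤ G.cV v) ∧
  (∀ t ≤ tmax, ∀ e ∈ G.E, ({p : P | es t p = Sum.inr e}.ncard : ℤ) ≤ G.cE e) ∧
  (∀ p : P, ∃ v ∈ G.EX, es tmax p = Sum.inl v)

/-- `Nev G es D` is the number of people evacuated by deadline `D`, i.e. the
number of people located at an exit at time `D`. -/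
noncomputable def Nev {V P : Type} [Fintype P] (G : BuildingGraph V)
    (es : ℕ → P → Loc V) (D : ℕ) : ℕ :=
  {p : P | ∃ v ∈ G.EX, es D p = Sum.inl v}.ncard

/-- The `Δ`-delayed version of a schedule: `es^Δ(t) = es(0)` for `t < Δ` and
`es^Δ(t) = es(t − Δ)` for `Δ ≤ t`. -/
def delayed {V P : Type} (es : ℕ → P → Loc V) (Δ : ℕ) : ℕ → P → Loc V :=
  fun t => if t < Δ then es 0 else es (t - Δ)

/-!
The delayed schedule is `es` read off the clock `t ↦ t - Δ`, which starts at `0` and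
advances by at most one per tick. Reading a weak evacuation schedule off any such lazy
clock only inserts pauses in which everybody stays put: each movement constraint is
either met trivially during a pause or is the corresponding constraint of `es`, a
lazy clock never makes a trip shorter, and exits stay absorbing because the clock is
monotone.
-/

def IsLazyClock (f : ℕ → ℕ) : Prop :=
  f 0 = 0 ∧ ∀ t, f (t + 1) = f t ∨ f (t + 1) = f t + 1

namespace IsLazyClock

variable {f : ℕ → ℕ} (hf : IsLazyClock f)
include hf

theorem monotone : Monotone f :=
  monotone_nat_of_le_succ fun t => by rcases hf.2 t with h | h <;> omega

theorem le_add (t k : ℕ) : f (t + k) ≤ f t + k := by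
  induction k with
  | zero => rfl
  | succ k ih => rcases hf.2 (t + k) with h | h <;> rw [← add_assoc, h] <;> omega

theorem le_self (t : ℕ) : f t ≤ t := by
  simpa [hf.1] using hf.le_add 0 t

end IsLazyClock

theorem isLazyClock_sub (Δ : ℕ) : IsLazyClock (· - Δ) :=
  ⟨Nat.zero_sub Δ, fun t => by dsimp only; omega⟩

theorem IsWES.comp_lazyClock {V P : Type} {G : BuildingGraph V} {tmax : ℕ}
    {es : ℕ → P → Loc V} (hes : IsWES G tmax es) {f : ℕ → ℕ} (hf : IsLazyClock f) :
    IsWES G tmax (fun t => es (f t)) := by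
  obtain ⟨hvertex, hedge, htravel, hexit⟩ := hes
  refine ⟨fun p t v₁ ht hv => ?_, fun p t v₁ v₂ ht he hv => ?_,
    fun p t k v₁ v₂ he htk hv₁ hv₂ => ?_, fun p t' t'' ht htmax hex => ?_⟩
  · rcases hf.2 t with hstay | hstep
    · exact .inl (by simpa only [hstay] using hv)
    · simpa only [hstep] using hvertex p (f t) v₁ ((hf.le_self t).trans_lt ht) hv
  · rcases hf.2 t with hstay | hstep
    · exact .inl (by simpa only [hstay] using hv)
    · simpa only [hstep] using hedge p (f t) v₁ v₂ ((hf.le_self t).trans_lt ht) he hv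
  · have hmono : f t ≤ f (t + k) := hf.monotone (Nat.le_add_right t k)
    have hk : f (t + k) = f t + (f (t + k) - f t) := by omega
    have hdist := htravel p (f t) (f (t + k) - f t) v₁ v₂ he
      (hk ▸ (hf.le_self _).trans htk) hv₁ (hk ▸ hv₂)
    have hshorter := hf.le_add t k
    omega
  · rcases (hf.monotone ht.le).eq_or_lt with heq | hlt
    · exact congrArg (es · p) heq.symm
    · exact hexit p (f t') (f t'') hlt ((hf.le_self t'').trans htmax) hex

theorem delayed_eq {V P : Type} (es : ℕ → P → Loc V) (Δ t : ℕ) : delayed es Δ t = es (t - Δ) := by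
  unfold delayed
  split_ifs with h
  · rw [Nat.sub_eq_zero_of_le h.le]
  · rfl

theorem delayed_isWES_general {V P : Type} (G : BuildingGraph V) (tmax : ℕ)
    (es : ℕ → P → Loc V) (hes : IsWES G tmax es)
    (Δ : ℕ) :
    IsWES G tmax (delayed es Δ) := by
  have hdelayed : delayed es Δ = fun t => es (t - Δ) := funext (delayed_eq es Δ)
  exact hdelayed ▸ hes.comp_lazyClock (isLazyClock_sub Δ)

/-- The `Δ`-delayed version of a weak evacuation schedule is a
weak evacuation schedule. -/
theorem delayed_isWES {V P : Type} (G : BuildingGraph V) (tmax : ℕ)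
    (es : ℕ → P → Loc V) (hes : IsWES G tmax es)
    (Δ : ℕ) (hΔ : Δ ≤ tmax) :
    IsWES G tmax (delayed es Δ) :=
  delayed_isWES_general G tmax es hes Δ
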